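/- arXiv:1409.4708 — 3 statements merged into one kernel-verified Lean document; each statement's English description precedes it below -/
import Mathlib

section
/- Let A be a finite set and H a nonnegative, strongly subadditive real-valued function on subsets of A with H(∅) = 0. Suppose A is partitioned into pairwise disjoint nonempty subsets B_1, …, B_k with A = B_1 ∪ … ∪ B_k and H(A) = H(B_1) + … + H(B_k). For nonempty S ⊆ A let I_A(S) = −∑_{T ⊆ S} (−1)^{|T|} H(T ∪ (A∖S)), and for nonempty S ⊆ B_i let I_{B_i}(S) = −∑_{T ⊆ S} (−1)^{|T|} H(T ∪ (B_i∖S)). Then for every nonempty S ⊆ A: if S ⊆ B_i for some i then I_A(S) = I_{B_i}(S), and if S intersects at least two of the blocks B_i then I_A(S) = 0. -/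
/-!
Strong subadditivity makes independence hereditary: if `H (P ∪ Q) = H P + H Q` for disjoint `P`,
`Q`, then `H (U ∪ V) = H U + H V` for all `U ⊆ P`, `V ⊆ Q`. Hence `H X = ∑ i, H (X ∩ B i)` for
every `X ⊆ A`, and since `sharedInfo A H S` is linear in `H`, it splits into the shared
informations of the restrictions `U ↦ H (U ∩ B i)`. For a block missing some `x ∈ S` the terms
`T` and `insert x T` of the alternating sum cancel; for a block containing `S` the term is
`sharedInfo (B i) H S`.
-/

open Finset

/-- The shared information of the irreducible dependency (relative to the system on the
component set `X`) that includes the components in `S` and excludes those in `X \ S`: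
`I_X(S) = −∑_{T ⊆ S} (−1)^{|T|} H(T ∪ (X∖S))`. -/
noncomputable def sharedInfo {α : Type*} [DecidableEq α]
    (X : Finset α) (H : Finset α → ℝ) (S : Finset α) : ℝ :=
  -∑ T ∈ S.powerset, (-1 : ℝ) ^ T.card * H (T ∪ (X \ S))

section Entropy

variable {α : Type*} [DecidableEq α] {A : Finset α} {H : Finset α → ℝ}

lemma subadditive_of_strongSubadditive (hpos : ∀ U ⊆ A, 0 ≤ H U)
    (hssa : ∀ U ⊆ A, ∀ V ⊆ A, H (U ∪ V) ≤ H U + H V - H (U ∩ V))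
    {U V : Finset α} (hU : U ⊆ A) (hV : V ⊆ A) : H (U ∪ V) ≤ H U + H V := by
  linarith [hssa U hU V hV, hpos (U ∩ V) (inter_subset_left.trans hU)]

lemma le_sum_biUnion {ι : Type*} [DecidableEq ι] (hpos : ∀ U ⊆ A, 0 ≤ H U) (hH0 : H ∅ = 0)
    (hssa : ∀ U ⊆ A, ∀ V ⊆ A, H (U ∪ V) ≤ H U + H V - H (U ∩ V))
    {B : ι → Finset α} (hB : ∀ i, B i ⊆ A) (s : Finset ι) :
    H (s.biUnion B) ≤ ∑ i ∈ s, H (B i) := by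
  induction s using Finset.induction_on with
  | empty => simp [hH0]
  | insert a s ha ih =>
    rw [biUnion_insert, sum_insert ha]
    have hsA : s.biUnion B ⊆ A := biUnion_subset.2 fun i _ => hB i
    linarith [subadditive_of_strongSubadditive hpos hssa (hB a) hsA]

lemma biUnion_eq_sum_of_univ {ι : Type*} [Fintype ι] [DecidableEq ι]
    (hpos : ∀ U ⊆ A, 0 ≤ H U) (hH0 : H ∅ = 0)
    (hssa : ∀ U ⊆ A, ∀ V ⊆ A, H (U ∪ V) ≤ H U + H V - H (U ∩ V))
    {B : ι → Finset α} (hB : ∀ i, B i ⊆ A) (hind : H (univ.biUnion B) = ∑ i, H (B i))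
    (s : Finset ι) : H (s.biUnion B) = ∑ i ∈ s, H (B i) := by
  have hsplit : univ.biUnion B = s.biUnion B ∪ sᶜ.biUnion B := by
    rw [← union_biUnion, union_compl]
  have hsub := subadditive_of_strongSubadditive hpos hssa
    (biUnion_subset.2 fun i (_ : i ∈ s) => hB i) (biUnion_subset.2 fun i (_ : i ∈ sᶜ) => hB i)
  rw [← hsplit, hind, ← sum_add_sum_compl s] at hsub
  linarith [le_sum_biUnion hpos hH0 hssa hB s, le_sum_biUnion hpos hH0 hssa hB sᶜ]

/-- Strong subadditivity, applied twice, gives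
`H P + H Q ≤ H (U ∪ V) + (H P - H U) + (H Q - H V)`. -/
lemma union_eq_add_of_subset (hH0 : H ∅ = 0)
    (hssa : ∀ U ⊆ A, ∀ V ⊆ A, H (U ∪ V) ≤ H U + H V - H (U ∩ V))
    {P Q U V : Finset α} (hPA : P ⊆ A) (hQA : Q ⊆ A) (hPQ : Disjoint P Q)
    (hind : H (P ∪ Q) = H P + H Q) (hU : U ⊆ P) (hV : V ⊆ Q) :
    H (U ∪ V) = H U + H V := by
  have hUA := hU.trans hPA
  have hVA := hV.trans hQA
  have h1 := hssa (U ∪ Q) (union_subset hUA hQA) P hPA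
  have h2 := hssa (U ∪ V) (union_subset hUA hVA) Q hQA
  have h3 := hssa U hUA V hVA
  rw [union_right_comm, union_eq_right.2 hU, union_inter_distrib_right,
    inter_eq_left.2 hU, disjoint_iff_inter_eq_empty.1 hPQ.symm, union_empty] at h1
  rw [union_assoc, union_eq_right.2 hV, union_inter_distrib_right,
    disjoint_iff_inter_eq_empty.1 (hPQ.mono_left hU), inter_eq_left.2 hV, empty_union] at h2
  rw [disjoint_iff_inter_eq_empty.1 (hPQ.mono hU hV), hH0] at h3
  linarith

end Entropy

section Decomposition

open Function

variable {α ι : Type*} [DecidableEq α] [Fintype ι] [DecidableEq ι] {A : Finset α}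
  {H : Finset α → ℝ} {B : ι → Finset α}

lemma inter_biUnion_eq_sum (hpos : ∀ U ⊆ A, 0 ≤ H U) (hH0 : H ∅ = 0)
    (hssa : ∀ U ⊆ A, ∀ V ⊆ A, H (U ∪ V) ≤ H U + H V - H (U ∩ V))
    (hB : ∀ i, B i ⊆ A) (hdisj : Pairwise (Disjoint on B))
    (hind : H (univ.biUnion B) = ∑ i, H (B i)) (X : Finset α) (s : Finset ι) :
    H (X ∩ s.biUnion B) = ∑ i ∈ s, H (X ∩ B i) := by
  induction s using Finset.induction_on with
  | empty => simp [hH0]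
  | insert a s ha ih =>
    have hsum := biUnion_eq_sum_of_univ hpos hH0 hssa hB hind (insert a s)
    rw [biUnion_insert, sum_insert ha, ← biUnion_eq_sum_of_univ hpos hH0 hssa hB hind s] at hsum
    have hdis : Disjoint (B a) (s.biUnion B) :=
      (disjoint_biUnion_right _ _ _).2 fun i hi => hdisj fun h => ha (h ▸ hi)
    rw [biUnion_insert, sum_insert ha, inter_union_distrib_left, ← ih,
      union_eq_add_of_subset hH0 hssa (hB a) (biUnion_subset.2 fun i _ => hB i) hdis hsum
        inter_subset_right inter_subset_right]

lemma eq_sum_inter_of_independent (hpos : ∀ U ⊆ A, 0 ≤ H U) (hH0 : H ∅ = 0)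
    (hssa : ∀ U ⊆ A, ∀ V ⊆ A, H (U ∪ V) ≤ H U + H V - H (U ∩ V))
    (hdisj : Pairwise (Disjoint on B)) (hcover : univ.biUnion B = A)
    (hind : H A = ∑ i, H (B i)) {X : Finset α} (hX : X ⊆ A) :
    H X = ∑ i, H (X ∩ B i) := by
  have hB : ∀ i, B i ⊆ A := fun i => hcover ▸ subset_biUnion_of_mem B (mem_univ i)
  rw [← inter_biUnion_eq_sum hpos hH0 hssa hB hdisj (hcover ▸ hind), hcover, inter_eq_left.2 hX]

end Decomposition

/-- Pairing `T` with `insert x T` cancels the alternating sum. -/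
lemma sum_powerset_neg_one_pow_card_mul_eq_zero {α R : Type*} [DecidableEq α] [CommRing R]
    {S : Finset α} {x : α} (hx : x ∈ S) {f : Finset α → R}
    (hf : ∀ T, x ∉ T → f (insert x T) = f T) :
    ∑ T ∈ S.powerset, (-1 : R) ^ T.card * f T = 0 := by
  rw [← insert_erase hx, sum_powerset_insert (notMem_erase x S), ← sum_add_distrib]
  refine sum_eq_zero fun T hT => ?_
  have hxT : x ∉ T := fun h => notMem_erase x S (mem_powerset.1 hT h)
  rw [card_insert_of_notMem hxT, hf T hxT, pow_succ]
  ring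

section SharedInfo

variable {α : Type*} [DecidableEq α] {X S : Finset α}

lemma sharedInfo_congr {H H' : Finset α → ℝ} (hS : S ⊆ X) (h : ∀ U ⊆ X, H U = H' U) :
    sharedInfo X H S = sharedInfo X H' S := by
  unfold sharedInfo
  congr 1
  refine sum_congr rfl fun T hT => ?_
  rw [h _ (union_subset ((mem_powerset.1 hT).trans hS) sdiff_subset)]

lemma sharedInfo_sum {ι : Type*} (s : Finset ι) (F : ι → Finset α → ℝ) :
    sharedInfo X (fun U => ∑ i ∈ s, F i U) S = ∑ i ∈ s, sharedInfo X (F i) S := by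
  simp only [sharedInfo, mul_sum, ← sum_neg_distrib]
  exact sum_comm

lemma sharedInfo_restrict_eq_zero {H : Finset α → ℝ} {P : Finset α} {x : α} (hxS : x ∈ S)
    (hxP : x ∉ P) : sharedInfo X (fun U => H (U ∩ P)) S = 0 := by
  rw [sharedInfo, neg_eq_zero]
  refine sum_powerset_neg_one_pow_card_mul_eq_zero hxS fun T _ => ?_
  rw [insert_union, insert_inter_of_notMem hxP]

lemma sharedInfo_restrict_of_subset {H : Finset α → ℝ} {P : Finset α} (hSP : S ⊆ P)
    (hPX : P ⊆ X) : sharedInfo X (fun U => H (U ∩ P)) S = sharedInfo P H S := by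
  unfold sharedInfo
  congr 1
  refine sum_congr rfl fun T hT => ?_
  have hTS := mem_powerset.1 hT
  have hset : (T ∪ (X \ S)) ∩ P = T ∪ (P \ S) := by
    ext y
    grind
  rw [← hset]

end SharedInfo

theorem sharedInfo_of_independent_partition_general {α : Type*} [DecidableEq α]
    (A : Finset α) (H : Finset α → ℝ) (k : ℕ) (B : Fin k → Finset α)
    (hpos : ∀ U ⊆ A, 0 ≤ H U) (hH0 : H ∅ = 0)
    (hssa : ∀ U ⊆ A, ∀ V ⊆ A, H (U ∪ V) ≤ H U + H V - H (U ∩ V))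
    (hdisj : ∀ i j, i ≠ j → Disjoint (B i) (B j))
    (hcover : Finset.univ.biUnion B = A)
    (hind : H A = ∑ i, H (B i)) :
    ∀ S ⊆ A, S ≠ ∅ →
      (∀ i, S ⊆ B i → sharedInfo A H S = sharedInfo (B i) H S) ∧
      ((∃ i j, i ≠ j ∧ (S ∩ B i).Nonempty ∧ (S ∩ B j).Nonempty) →
        sharedInfo A H S = 0) := by
  intro S hS hSne
  have hsplit : sharedInfo A H S = ∑ i, sharedInfo A (fun U => H (U ∩ B i)) S := by
    rw [← sharedInfo_sum]
    exact sharedInfo_congr hS fun U hU =>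
      eq_sum_inter_of_independent hpos hH0 hssa hdisj hcover hind hU
  have hnotMem {i j x} (hij : i ≠ j) (hx : x ∈ B i) : x ∉ B j :=
    disjoint_left.1 (hdisj i j hij) hx
  constructor
  · intro i hSi
    obtain ⟨x, hx⟩ := nonempty_iff_ne_empty.2 hSne
    rw [hsplit, sum_eq_single i (fun j _ hji => sharedInfo_restrict_eq_zero hx
      (hnotMem hji.symm (hSi hx))) (absurd (mem_univ i)),
      sharedInfo_restrict_of_subset hSi (hcover ▸ subset_biUnion_of_mem B (mem_univ i))]
  · rintro ⟨i, j, hij, ⟨x, hx⟩, ⟨y, hy⟩⟩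
    obtain ⟨hxS, hxi⟩ := mem_inter.1 hx
    obtain ⟨hyS, hyj⟩ := mem_inter.1 hy
    rw [hsplit]
    refine sum_eq_zero fun l _ => ?_
    by_cases hli : l = i
    · exact sharedInfo_restrict_eq_zero hyS (hli ▸ hnotMem hij.symm hyj)
    · exact sharedInfo_restrict_eq_zero hxS (hnotMem (Ne.symm hli) hxi)

/-- If `A` decomposes into independent subsystems `B_1, …, B_k`, then an irreducible
dependency of `A` has nonzero information only if it includes components from a single
block, in which case its information equals the corresponding information in that
block's subsystem. -/
theorem sharedInfo_of_independent_partition {α : Type*} [DecidableEq α]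
    (A : Finset α) (H : Finset α → ℝ) (k : ℕ) (B : Fin k → Finset α)
    (hpos : ∀ U ⊆ A, 0 ≤ H U) (hH0 : H ∅ = 0)
    (hssa : ∀ U ⊆ A, ∀ V ⊆ A, H (U ∪ V) ≤ H U + H V - H (U ∩ V))
    (hne : ∀ i, (B i).Nonempty)
    (hdisj : ∀ i j, i ≠ j → Disjoint (B i) (B j))
    (hcover : Finset.univ.biUnion B = A)
    (hind : H A = ∑ i, H (B i)) :
    ∀ S ⊆ A, S ≠ ∅ →
      (∀ i, S ⊆ B i → sharedInfo A H S = sharedInfo (B i) H S) ∧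
      ((∃ i j, i ≠ j ∧ (S ∩ B i).Nonempty ∧ (S ∩ B j).Nonempty) →
        sharedInfo A H S = 0) :=
  sharedInfo_of_independent_partition_general A H k B hpos hH0 hssa hdisj hcover hind
end

section
/- Let A be a finite set, H a nonnegative, strongly subadditive real-valued function on subsets of A with H(∅) = 0, and σ a positive real scale for each a ∈ A. Suppose A is partitioned into pairwise disjoint nonempty subsets B_1, …, B_k with H(A) = H(B_1) + … + H(B_k). For X ⊆ A define the complexity profile of the subsystem on X by C_X(y) = ∑_{S ⊆ X nonempty, s(S) ≥ y} I_X(S), where I_X(S) = −∑_{T ⊆ S} (−1)^{|T|} H(T ∪ (X∖S)) and s(S) = ∑_{a∈S} σ(a). Then for every y ≥ 0, C_A(y) = C_{B_1}(y) + … + C_{B_k}(y). -/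
open Finset

/-- The complexity profile of the subsystem on `X`:
`C_X(y) = ∑_{S ⊆ X nonempty, s(S) ≥ y} I_X(S)` where `s(S) = ∑_{a∈S} σ(a)`. -/
noncomputable def complexityProfile {α : Type*} [DecidableEq α]
    (X : Finset α) (H : Finset α → ℝ) (σ : α → ℝ) (y : ℝ) : ℝ :=
  ∑ S ∈ X.powerset.filter (fun S => S ≠ ∅ ∧ y ≤ ∑ a ∈ S, σ a), sharedInfo X H S

/-- Alternating sums over the powerset of `P ∪ Q` of a function depending only on the
intersection with `P` vanish when `Q` is nonempty and disjoint from `P`. -/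
lemma cp_cancel {α : Type*} [DecidableEq α] (P Q : Finset α) (hQ : Q.Nonempty)
    (hd : Disjoint P Q) (f : Finset α → ℝ) :
    ∑ T ∈ (P ∪ Q).powerset, (-1 : ℝ) ^ T.card * f (T ∩ P) = 0 := by
  obtain ⟨q, hq⟩ := hQ
  have hqP : q ∉ P := Finset.disjoint_right.mp hd hq
  have hrep : P ∪ Q = insert q ((P ∪ Q).erase q) :=
    (Finset.insert_erase (Finset.mem_union_right _ hq)).symm
  rw [hrep, Finset.sum_powerset_insert (Finset.notMem_erase _ _)]
  rw [← Finset.sum_add_distrib]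
  refine Finset.sum_eq_zero fun T hT => ?_
  have hqT : q ∉ T := fun h =>
    Finset.notMem_erase q (P ∪ Q) (Finset.mem_powerset.mp hT h)
  rw [Finset.card_insert_of_notMem hqT, Finset.insert_inter_of_notMem hqP,
    pow_succ]
  ring

/-- Alternating sum over a nonempty powerset vanishes (real version). -/
lemma cp_alt_zero {α : Type*} [DecidableEq α] (S : Finset α) (hS : S.Nonempty) :
    ∑ T ∈ S.powerset, (-1 : ℝ) ^ T.card = 0 := by
  have := cp_cancel (∅ : Finset α) S hS (Finset.disjoint_left.mpr (by simp))
    (fun _ => (1 : ℝ))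
  simpa using this

/-- Two independent subsystems remain independent when restricted. -/
lemma cp_pair {α : Type*} [DecidableEq α] (A : Finset α) (H : Finset α → ℝ)
    (hH0 : H ∅ = 0)
    (hssa : ∀ U ⊆ A, ∀ V ⊆ A, H (U ∪ V) ≤ H U + H V - H (U ∩ V))
    (U V : Finset α) (hU : U ⊆ A) (hV : V ⊆ A) (hUV : Disjoint U V)
    (hind : H (U ∪ V) = H U + H V)
    (U' V' : Finset α) (hU' : U' ⊆ U) (hV' : V' ⊆ V) :
    H (U' ∪ V') = H U' + H V' := by
  have hU'A : U' ⊆ A := hU'.trans hU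
  have hV'A : V' ⊆ A := hV'.trans hV
  have hd' : Disjoint U' V' := hUV.mono hU' hV'
  have h1 : H (U' ∪ V') ≤ H U' + H V' := by
    have := hssa U' hU'A V' hV'A
    rwa [Finset.disjoint_iff_inter_eq_empty.mp hd', hH0, sub_zero] at this
  have h2 := hssa U hU (U' ∪ V') (Finset.union_subset hU'A hV'A)
  have e1 : U ∪ (U' ∪ V') = U ∪ V' := by
    rw [← Finset.union_assoc, Finset.union_eq_left.mpr hU']
  have e2 : U ∩ (U' ∪ V') = U' := by
    rw [Finset.inter_union_distrib_left, Finset.inter_eq_right.mpr hU',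
      Finset.disjoint_iff_inter_eq_empty.mp (hUV.mono_right hV'), Finset.union_empty]
  rw [e1, e2] at h2
  have h3 := hssa (U ∪ V') (Finset.union_subset hU hV'A) V hV
  have e3 : (U ∪ V') ∪ V = U ∪ V := by
    rw [Finset.union_assoc, Finset.union_eq_right.mpr hV']
  have e4 : (U ∪ V') ∩ V = V' := by
    rw [Finset.union_inter_distrib_right, Finset.inter_eq_left.mpr hV',
      Finset.disjoint_iff_inter_eq_empty.mp hUV, Finset.empty_union]
  rw [e3, e4, hind] at h3
  linarith

/-- Subadditivity over finitely many disjoint pieces. -/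
lemma cp_subadd {α : Type*} [DecidableEq α] (A : Finset α) (H : Finset α → ℝ)
    (hpos : ∀ U ⊆ A, 0 ≤ H U) (hH0 : H ∅ = 0)
    (hssa : ∀ U ⊆ A, ∀ V ⊆ A, H (U ∪ V) ≤ H U + H V - H (U ∩ V))
    {ι : Type*} [DecidableEq ι] (J : Finset ι) (C : ι → Finset α)
    (hC : ∀ i ∈ J, C i ⊆ A) :
    H (J.biUnion C) ≤ ∑ i ∈ J, H (C i) := by
  induction J using Finset.induction with
  | empty => simp [hH0]
  | @insert a J ha ih =>
    have hCa : C a ⊆ A := hC a (Finset.mem_insert_self a J)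
    have hC' : ∀ i ∈ J, C i ⊆ A := fun i hi => hC i (Finset.mem_insert_of_mem hi)
    have hbU : J.biUnion C ⊆ A := Finset.biUnion_subset.mpr hC'
    have h1 := hssa (C a) hCa (J.biUnion C) hbU
    have h2 : 0 ≤ H (C a ∩ J.biUnion C) :=
      hpos _ ((Finset.inter_subset_left).trans hCa)
    rw [Finset.biUnion_insert, Finset.sum_insert ha]
    have := ih hC'
    linarith

/-- Independence passes to arbitrary subsets of the union. -/
lemma cp_blocks {α : Type*} [DecidableEq α] (A : Finset α) (H : Finset α → ℝ)
    (hpos : ∀ U ⊆ A, 0 ≤ H U) (hH0 : H ∅ = 0)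
    (hssa : ∀ U ⊆ A, ∀ V ⊆ A, H (U ∪ V) ≤ H U + H V - H (U ∩ V))
    {ι : Type*} [DecidableEq ι] (J : Finset ι) (C : ι → Finset α)
    (hC : ∀ i ∈ J, C i ⊆ A)
    (hd : ∀ i ∈ J, ∀ j ∈ J, i ≠ j → Disjoint (C i) (C j))
    (hind : H (J.biUnion C) = ∑ i ∈ J, H (C i)) :
    ∀ S ⊆ J.biUnion C, H S = ∑ i ∈ J, H (S ∩ C i) := by
  induction J using Finset.induction with
  | empty =>
    intro S hS
    simp only [Finset.biUnion_empty, Finset.subset_empty] at hS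
    simp [hS, hH0]
  | @insert a J ha ih =>
    intro S hS
    have hCa : C a ⊆ A := hC a (Finset.mem_insert_self a J)
    have hC' : ∀ i ∈ J, C i ⊆ A := fun i hi => hC i (Finset.mem_insert_of_mem hi)
    have hd' : ∀ i ∈ J, ∀ j ∈ J, i ≠ j → Disjoint (C i) (C j) := fun i hi j hj =>
      hd i (Finset.mem_insert_of_mem hi) j (Finset.mem_insert_of_mem hj)
    have hbU : J.biUnion C ⊆ A := Finset.biUnion_subset.mpr hC'
    have hdisjUV : Disjoint (C a) (J.biUnion C) := by
      rw [Finset.disjoint_biUnion_right]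
      intro i hi
      exact hd a (Finset.mem_insert_self a J) i (Finset.mem_insert_of_mem hi)
        (fun h => ha (h ▸ hi))
    -- first extract that H (J.biUnion C) = ∑ i ∈ J, H (C i)
    have hsub : H (J.biUnion C) ≤ ∑ i ∈ J, H (C i) :=
      cp_subadd A H hpos hH0 hssa J C hC'
    have hpairsub : H (C a ∪ J.biUnion C) ≤ H (C a) + H (J.biUnion C) := by
      have := hssa (C a) hCa (J.biUnion C) hbU
      rwa [Finset.disjoint_iff_inter_eq_empty.mp hdisjUV, hH0, sub_zero] at this
    rw [Finset.biUnion_insert, Finset.sum_insert ha] at hind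
    have hVeq : H (J.biUnion C) = ∑ i ∈ J, H (C i) := by linarith
    have hUVind : H (C a ∪ J.biUnion C) = H (C a) + H (J.biUnion C) := by linarith
    -- split S
    rw [Finset.biUnion_insert] at hS
    have hSsplit : S = (S ∩ C a) ∪ (S ∩ J.biUnion C) := by
      rw [← Finset.inter_union_distrib_left, Finset.inter_eq_left.mpr hS]
    have hHpair : H ((S ∩ C a) ∪ (S ∩ J.biUnion C)) =
        H (S ∩ C a) + H (S ∩ J.biUnion C) :=
      cp_pair A H hH0 hssa (C a) (J.biUnion C) hCa hbU hdisjUV hUVind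
        (S ∩ C a) (S ∩ J.biUnion C) Finset.inter_subset_right
        Finset.inter_subset_right
    have hrec : H (S ∩ J.biUnion C) = ∑ i ∈ J, H ((S ∩ J.biUnion C) ∩ C i) :=
      ih hC' hd' hVeq (S ∩ J.biUnion C) Finset.inter_subset_right
    have hinter : ∀ i ∈ J, (S ∩ J.biUnion C) ∩ C i = S ∩ C i := by
      intro i hi
      have hsub2 : C i ⊆ J.biUnion C := fun x hx => Finset.mem_biUnion.mpr ⟨i, hi, hx⟩
      rw [Finset.inter_assoc, Finset.inter_eq_right.mpr hsub2]
    rw [Finset.sum_insert ha]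
    calc H S = H ((S ∩ C a) ∪ (S ∩ J.biUnion C)) := by rw [← hSsplit]
      _ = H (S ∩ C a) + H (S ∩ J.biUnion C) := hHpair
      _ = H (S ∩ C a) + ∑ i ∈ J, H (S ∩ C i) := by
          rw [hrec]; congr 1; exact Finset.sum_congr rfl fun i hi => by rw [hinter i hi]

/-- Additivity of the complexity profile over independent subsystems: if `A` decomposes
into independent subsystems `B_1, …, B_k`, then `C_A(y) = C_{B_1}(y) + … + C_{B_k}(y)`
for every `y ≥ 0`. -/
theorem complexityProfile_additive {α : Type*} [DecidableEq α]
    (A : Finset α) (H : Finset α → ℝ) (σ : α → ℝ) (k : ℕ) (B : Fin k → Finset α)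
    (hpos : ∀ U ⊆ A, 0 ≤ H U) (hH0 : H ∅ = 0)
    (hssa : ∀ U ⊆ A, ∀ V ⊆ A, H (U ∪ V) ≤ H U + H V - H (U ∩ V))
    (hσ : ∀ a ∈ A, 0 < σ a)
    (hne : ∀ i, (B i).Nonempty)
    (hdisj : ∀ i j, i ≠ j → Disjoint (B i) (B j))
    (hcover : Finset.univ.biUnion B = A)
    (hind : H A = ∑ i, H (B i)) :
    ∀ y : ℝ, 0 ≤ y →
      complexityProfile A H σ y = ∑ i, complexityProfile (B i) H σ y := by
  intro y hy
  classical
  have hBA : ∀ i, B i ⊆ A := by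
    intro i
    rw [← hcover]
    exact Finset.subset_biUnion_of_mem B (Finset.mem_univ i)
  have hstar : ∀ S ⊆ A, H S = ∑ i, H (S ∩ B i) := by
    have := cp_blocks A H hpos hH0 hssa (Finset.univ : Finset (Fin k)) B
      (fun i _ => hBA i) (fun i _ j _ hij => hdisj i j hij)
      (by rw [hcover, hind])
    rwa [hcover] at this
  -- decomposition of each summand of sharedInfo A H S
  have hterm : ∀ S ⊆ A, ∀ T ⊆ S,
      H (T ∪ (A \ S)) = ∑ i, H ((T ∩ B i) ∪ (B i \ S)) := by
    intro S hS T hT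
    have hTA : T ⊆ A := hT.trans hS
    rw [hstar (T ∪ (A \ S)) (Finset.union_subset hTA (Finset.sdiff_subset))]
    refine Finset.sum_congr rfl fun i _ => ?_
    congr 1
    ext x
    simp only [Finset.mem_inter, Finset.mem_union, Finset.mem_sdiff]
    constructor
    · rintro ⟨hx1 | ⟨hxA, hxS⟩, hxB⟩
      · exact Or.inl ⟨hx1, hxB⟩
      · exact Or.inr ⟨hxB, hxS⟩
    · rintro (⟨hxT, hxB⟩ | ⟨hxB, hxS⟩)
      · exact ⟨Or.inl hxT, hxB⟩
      · exact ⟨Or.inr ⟨hBA i hxB, hxS⟩, hxB⟩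
  have hshared : ∀ S ⊆ A,
      sharedInfo A H S = -∑ i, ∑ T ∈ S.powerset,
        (-1 : ℝ) ^ T.card * H ((T ∩ B i) ∪ (B i \ S)) := by
    intro S hS
    unfold sharedInfo
    rw [Finset.sum_comm]
    congr 1
    refine Finset.sum_congr rfl fun T hT => ?_
    rw [hterm S hS T (Finset.mem_powerset.mp hT), Finset.mul_sum]
  -- Lemma D: shared info vanishes if S is not inside a single block
  have hD : ∀ S ⊆ A, (¬ ∃ j, S ⊆ B j) → sharedInfo A H S = 0 := by
    intro S hS hnot
    rw [hshared S hS]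
    rw [Finset.sum_eq_zero, neg_zero]
    intro i _
    have hQ : (S \ B i).Nonempty := by
      rw [Finset.sdiff_nonempty]
      exact fun h => hnot ⟨i, h⟩
    have hPQ : (S ∩ B i) ∪ (S \ B i) = S := by
      ext x
      simp only [Finset.mem_union, Finset.mem_inter, Finset.mem_sdiff]
      tauto
    have hdPQ : Disjoint (S ∩ B i) (S \ B i) := by
      rw [Finset.disjoint_left]
      intro x hx hx'
      exact (Finset.mem_sdiff.mp hx').2 (Finset.mem_inter.mp hx).2
    have hc := cp_cancel (S ∩ B i) (S \ B i) hQ hdPQ (fun T => H (T ∪ (B i \ S)))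
    rw [hPQ] at hc
    rw [← hc]
    refine Finset.sum_congr rfl fun T hT => ?_
    have hTS : T ⊆ S := Finset.mem_powerset.mp hT
    congr 2
    rw [← Finset.inter_assoc, Finset.inter_eq_left.mpr hTS]
  -- Lemma C: shared info relative to A agrees with that relative to block B j
  have hC : ∀ j, ∀ S ⊆ B j, S.Nonempty → sharedInfo A H S = sharedInfo (B j) H S := by
    intro j S hSB hSne
    rw [hshared S (hSB.trans (hBA j))]
    rw [Finset.sum_eq_single j]
    · unfold sharedInfo
      congr 1
      refine Finset.sum_congr rfl fun T hT => ?_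
      have hTS : T ⊆ S := Finset.mem_powerset.mp hT
      rw [Finset.inter_eq_left.mpr (hTS.trans hSB)]
    · intro i _ hij
      have h1 : ∀ T ⊆ S, (T ∩ B i) ∪ (B i \ S) = B i := by
        intro T hTS
        have hTd : T ∩ B i = ∅ := by
          rw [← Finset.subset_empty]
          intro x hx
          rw [Finset.mem_inter] at hx
          exact absurd hx.2
            (Finset.disjoint_left.mp (hdisj j i (Ne.symm hij)) (hSB (hTS hx.1)))
        have hSd : B i \ S = B i := by
          rw [Finset.sdiff_eq_self_iff_disjoint]
          exact (hdisj i j hij).mono_right hSB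
        rw [hTd, hSd, Finset.empty_union]
      calc ∑ T ∈ S.powerset, (-1 : ℝ) ^ T.card * H ((T ∩ B i) ∪ (B i \ S))
          = ∑ T ∈ S.powerset, (-1 : ℝ) ^ T.card * H (B i) :=
            Finset.sum_congr rfl fun T hT => by
              rw [h1 T (Finset.mem_powerset.mp hT)]
        _ = (∑ T ∈ S.powerset, (-1 : ℝ) ^ T.card) * H (B i) := by
              rw [Finset.sum_mul]
        _ = 0 := by rw [cp_alt_zero S hSne, zero_mul]
    · intro h
      exact absurd (Finset.mem_univ j) h
  -- Now assemble the sums.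
  have hFdef : ∀ j : Fin k, complexityProfile (B j) H σ y =
      ∑ S ∈ (B j).powerset.filter (fun S => S ≠ ∅ ∧ y ≤ ∑ a ∈ S, σ a),
        sharedInfo A H S := by
    intro j
    unfold complexityProfile
    refine Finset.sum_congr rfl fun S hS => ?_
    simp only [Finset.mem_filter, Finset.mem_powerset] at hS
    exact (hC j S hS.1 (Finset.nonempty_iff_ne_empty.mpr hS.2.1)).symm
  set F : Fin k → Finset (Finset α) :=
    fun j => (B j).powerset.filter (fun S => S ≠ ∅ ∧ y ≤ ∑ a ∈ S, σ a) with hF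
  have hsumB : ∑ i, complexityProfile (B i) H σ y =
      ∑ S ∈ Finset.univ.biUnion F, sharedInfo A H S := by
    rw [Finset.sum_congr rfl (fun j _ => hFdef j)]
    rw [Finset.sum_biUnion]
    intro i _ j _ hij
    simp only [Finset.disjoint_left, hF, Finset.mem_filter, Finset.mem_powerset]
    rintro S ⟨hSi, hSne, -⟩ ⟨hSj, -, -⟩
    obtain ⟨x, hx⟩ := Finset.nonempty_iff_ne_empty.mpr hSne
    exact Finset.disjoint_left.mp (hdisj i j hij) (hSi hx) (hSj hx)
  -- split the big sum according to whether S lies in a single block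
  rw [hsumB]
  unfold complexityProfile
  rw [← Finset.sum_filter_add_sum_filter_not
    (A.powerset.filter (fun S => S ≠ ∅ ∧ y ≤ ∑ a ∈ S, σ a))
    (fun S => ∃ j, S ⊆ B j)]
  have hzero : ∑ S ∈ (A.powerset.filter (fun S => S ≠ ∅ ∧ y ≤ ∑ a ∈ S, σ a)).filter
      (fun S => ¬ ∃ j, S ⊆ B j), sharedInfo A H S = 0 := by
    refine Finset.sum_eq_zero fun S hS => ?_
    simp only [Finset.mem_filter, Finset.mem_powerset] at hS
    exact hD S hS.1.1 hS.2
  rw [hzero, add_zero]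
  congr 1
  ext S
  simp only [hF, Finset.mem_filter, Finset.mem_powerset, Finset.mem_biUnion,
    Finset.mem_univ, true_and]
  constructor
  · rintro ⟨⟨hSA, hSne, hSy⟩, j, hSj⟩
    exact ⟨j, hSj, hSne, hSy⟩
  · rintro ⟨j, hSj, hSne, hSy⟩
    exact ⟨⟨hSj.trans (hBA j), hSne, hSy⟩, j, hSj⟩
end

section
/- Let A be a finite set with |A| = N ≥ 3, all components of unit scale, and let H be the parity-bit information function H(V) = min(|V|, N−1) for V ⊆ A. Then for every y ≥ 0 the maximal utility of information satisfies U(y) = (N/(N−1)) · min(y, N−1); in particular U(y) = N y/(N−1) for 0 ≤ y ≤ N−1, so the marginal utility of information equals N/(N−1) on that range. -/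
open Finset

/-- A descriptor profile for the system on component set `A` with information function
`H`: constraints (i)–(iii). -/
def IsDescriptor {α : Type*} [DecidableEq α]
    (A : Finset α) (H : Finset α → ℝ) (J : Finset α → ℝ) : Prop :=
  (∀ V ⊆ A, 0 ≤ J V ∧ J V ≤ H V) ∧
  (∀ W V : Finset α, W ⊆ V → V ⊆ A →
    0 ≤ J V - J W ∧ J V - J W ≤ H V - H W) ∧
  (∀ V ⊆ A, ∀ W ⊆ A,
    J V + J W - J (V ∪ W) - J (V ∩ W) ≤ H V + H W - H (V ∪ W) - H (V ∩ W))

/-- The maximal utility of information (with unit scales):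
`U(y) = sup { ∑_{a∈A} J({a}) : J a descriptor profile with J(A) ≤ y }`. -/
noncomputable def maxUtility {α : Type*} [DecidableEq α]
    (A : Finset α) (H : Finset α → ℝ) (y : ℝ) : ℝ :=
  sSup {u : ℝ | ∃ J : Finset α → ℝ,
    IsDescriptor A H J ∧ J A ≤ y ∧ u = ∑ a ∈ A, J {a}}

lemma parity_cast {N : ℕ} (hN3 : 3 ≤ N) : ((N - 1 : ℕ) : ℝ) = (N:ℝ) - 1 := by
  have : 1 ≤ N := by omega
  push_cast [this]
  ring

lemma parity_upper {α : Type*} [DecidableEq α] (A : Finset α) (H : Finset α → ℝ) (N : ℕ)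
    (hN : A.card = N) (hN3 : 3 ≤ N)
    (hH : ∀ V ⊆ A, H V = (min V.card (N - 1) : ℕ))
    (J : Finset α → ℝ) (hJ : IsDescriptor A H J) :
    ((N:ℝ) - 1) * ∑ a ∈ A, J {a} ≤ (N:ℝ) * J A := by
  obtain ⟨h1, h2, h3⟩ := hJ
  have hH0 : H ∅ = 0 := by rw [hH ∅ (empty_subset A)]; simp
  have hJ0 : J ∅ = 0 := by
    have h := h1 ∅ (empty_subset A)
    linarith [h.1, h.2]
  have hHA : H A = (N:ℝ) - 1 := by
    rw [hH A subset_rfl, hN, Nat.min_eq_right (by omega)]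
    exact parity_cast hN3
  have hsum : ∀ V : Finset α, V ⊆ A → V.card ≤ N - 1 → ∑ b ∈ V, J {b} ≤ J V := by
    intro V
    induction V using Finset.induction_on with
    | empty => intro _ _; simp [hJ0]
    | @insert b W hb ih =>
      intro hA hcard
      have hbA : b ∈ A := hA (mem_insert_self b W)
      have hbs : ({b} : Finset α) ⊆ A := by simpa using hbA
      have hWA : W ⊆ A := (subset_insert b W).trans hA
      have hci : (insert b W).card = W.card + 1 := card_insert_of_notMem hb
      have hWc : W.card + 1 ≤ N - 1 := by omega
      have key := h3 W hWA {b} hbs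
      have hu : W ∪ {b} = insert b W := by rw [union_comm, ← insert_eq]
      have hi : W ∩ {b} = ∅ := by
        ext x; simp only [mem_inter, mem_singleton, notMem_empty, iff_false]
        rintro ⟨hx, rfl⟩; exact hb hx
      rw [hu, hi, hJ0, hH0] at key
      have hHW : H W = ((W.card : ℕ) : ℝ) := by
        rw [hH W hWA, Nat.min_eq_left (by omega)]
      have hHb : H {b} = 1 := by
        rw [hH {b} hbs, card_singleton, Nat.min_eq_left (by omega)]
        norm_num
      have hHi : H (insert b W) = ((W.card + 1 : ℕ) : ℝ) := by
        rw [hH _ hA, hci, Nat.min_eq_left hWc]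
      rw [hHW, hHb, hHi] at key
      push_cast at key
      have ihW := ih hWA (by omega)
      rw [sum_insert hb]
      linarith
  have hstep : ∀ a ∈ A, (∑ b ∈ A, J {b}) - J {a} ≤ J A := by
    intro a ha
    have hea : (A.erase a) ⊆ A := erase_subset a A
    have hce : (A.erase a).card = N - 1 := by rw [card_erase_of_mem ha, hN]
    have hs := hsum (A.erase a) hea (by omega)
    have heq : J (A.erase a) = J A := by
      have h := h2 (A.erase a) A hea subset_rfl
      have hHe : H (A.erase a) = (N:ℝ) - 1 := by
        rw [hH _ hea, hce, Nat.min_eq_left le_rfl]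
        exact parity_cast hN3
      rw [hHA, hHe] at h
      linarith [h.1, h.2]
    have hsum' : ∑ b ∈ A.erase a, J {b} = (∑ b ∈ A, J {b}) - J {a} := by
      rw [eq_sub_iff_add_eq, Finset.sum_erase_add A _ ha]
    linarith [hsum' ▸ hs]
  have hNsum := Finset.sum_le_sum hstep
  rw [Finset.sum_sub_distrib, Finset.sum_const, Finset.sum_const, hN, nsmul_eq_mul,
    nsmul_eq_mul] at hNsum
  linarith

/-- Marginal utility of information for the `N`-component parity-bit system
(`H(V) = min(|V|, N−1)`, unit scales): the maximal utility is
`U(y) = (N/(N−1)) · min(y, N−1)` for every `y ≥ 0`. -/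
theorem maxUtility_parity_bit {α : Type*} [DecidableEq α]
    (A : Finset α) (H : Finset α → ℝ) (N : ℕ)
    (hN : A.card = N) (hN3 : 3 ≤ N)
    (hH : ∀ V ⊆ A, H V = (min V.card (N - 1) : ℕ)) :
    ∀ y : ℝ, 0 ≤ y →
      maxUtility A H y = ((N : ℝ) / ((N : ℝ) - 1)) * min y ((N : ℝ) - 1) := by
  intro y hy
  have hNR : (3:ℝ) ≤ (N:ℝ) := by exact_mod_cast hN3
  have hN1 : (0:ℝ) < (N:ℝ) - 1 := by linarith
  set m := min y ((N:ℝ) - 1) with hm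
  have hm0 : 0 ≤ m := le_min hy (by linarith)
  have hmy : m ≤ y := min_le_left _ _
  have hmN : m ≤ (N:ℝ) - 1 := min_le_right _ _
  have hHA : H A = (N:ℝ) - 1 := by
    rw [hH A subset_rfl, hN, Nat.min_eq_right (by omega)]
    exact parity_cast hN3
  have hub : ∀ u ∈ {u : ℝ | ∃ J : Finset α → ℝ,
      IsDescriptor A H J ∧ J A ≤ y ∧ u = ∑ a ∈ A, J {a}},
      u ≤ ((N : ℝ) / ((N : ℝ) - 1)) * m := by
    rintro u ⟨J, hJ, hJy, rfl⟩
    have h := parity_upper A H N hN hN3 hH J hJ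
    have hJA : J A ≤ (N:ℝ) - 1 := by
      have h1 := (hJ.1 A subset_rfl).2
      linarith [hHA ▸ h1]
    have hJAm : J A ≤ m := le_min hJy hJA
    rw [div_mul_eq_mul_div, le_div_iff₀ hN1]
    nlinarith
  have hRnn : 0 ≤ ((N : ℝ) / ((N : ℝ) - 1)) * m :=
    mul_nonneg (div_nonneg (by linarith) hN1.le) hm0
  -- the witness
  set t := m / ((N:ℝ) - 1) with ht
  have ht0 : 0 ≤ t := div_nonneg hm0 hN1.le
  have ht1 : t ≤ 1 := (div_le_one hN1).mpr hmN
  set J : Finset α → ℝ := fun V => t * ((min V.card (N - 1) : ℕ) : ℝ) with hJdef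
  have hdesc : IsDescriptor A H J := by
    refine ⟨?_, ?_, ?_⟩
    · intro V hV
      have hx : (0:ℝ) ≤ ((min V.card (N - 1) : ℕ) : ℝ) := Nat.cast_nonneg _
      constructor
      · exact mul_nonneg ht0 hx
      · rw [hH V hV]; simp only [hJdef]; nlinarith
    · intro W V hWV hVA
      have hmono : (min W.card (N - 1) : ℕ) ≤ (min V.card (N - 1) : ℕ) :=
        min_le_min (card_le_card hWV) le_rfl
      have hmono' : ((min W.card (N - 1) : ℕ) : ℝ) ≤ ((min V.card (N - 1) : ℕ) : ℝ) := by
        exact_mod_cast hmono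
      rw [hH V hVA, hH W (hWV.trans hVA)]
      simp only [hJdef]
      constructor <;> nlinarith
    · intro V hV W hW
      have hUA : V ∪ W ⊆ A := union_subset hV hW
      have hIA : V ∩ W ⊆ A := inter_subset_left.trans hV
      have hnat : min (V ∪ W).card (N - 1) + min (V ∩ W).card (N - 1)
          ≤ min V.card (N - 1) + min W.card (N - 1) := by
        have h1 := Finset.card_union_add_card_inter V W
        have h2 : (V ∩ W).card ≤ V.card := card_le_card inter_subset_left
        have h3 : (V ∩ W).card ≤ W.card := card_le_card inter_subset_right
        have h4 : V.card ≤ (V ∪ W).card := card_le_card subset_union_left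
        omega
      have hnat' : ((min (V ∪ W).card (N - 1) : ℕ) : ℝ) + ((min (V ∩ W).card (N - 1) : ℕ) : ℝ)
          ≤ ((min V.card (N - 1) : ℕ) : ℝ) + ((min W.card (N - 1) : ℕ) : ℝ) := by
        exact_mod_cast hnat
      rw [hH V hV, hH W hW, hH _ hUA, hH _ hIA]
      simp only [hJdef]
      nlinarith [(Nat.cast_nonneg (min (V ∪ W).card (N-1)) : (0:ℝ) ≤ _),
        (Nat.cast_nonneg (min (V ∩ W).card (N-1)) : (0:ℝ) ≤ _)]
  have hJA : J A = m := by
    simp only [hJdef]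
    rw [hN, Nat.min_eq_right (by omega : N - 1 ≤ N), parity_cast hN3, ht,
      div_mul_cancel₀ _ hN1.ne']
  have hJsum : ∑ a ∈ A, J {a} = ((N : ℝ) / ((N : ℝ) - 1)) * m := by
    have hone : ∀ a ∈ A, J {a} = t := by
      intro a _
      simp only [hJdef, card_singleton]
      rw [Nat.min_eq_left (by omega : 1 ≤ N - 1)]
      norm_num
    rw [Finset.sum_congr rfl hone, Finset.sum_const, hN, nsmul_eq_mul, ht]
    ring
  have hmem : ((N : ℝ) / ((N : ℝ) - 1)) * m ∈ {u : ℝ | ∃ J : Finset α → ℝ,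
      IsDescriptor A H J ∧ J A ≤ y ∧ u = ∑ a ∈ A, J {a}} :=
    ⟨J, hdesc, by rw [hJA]; exact hmy, hJsum.symm⟩
  exact le_antisymm (Real.sSup_le hub hRnn) (le_csSup ⟨_, hub⟩ hmem)
end
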